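/- Let k be a field, A and B Noetherian k-algebras with R = A ⊗_k B Noetherian, and let I, K ⊆ A, J, L ⊆ B be ideals. If I^i : K^∞ = I^i and J^i : L^∞ = J^i for all 1 ≤ i ≤ s, then (I+J)^s :_R (KL)^∞ = (I+J)^s. -/

import Mathlib

open TensorProduct Ideal

/-- Extension of an ideal of `A` to `A ⊗[k] B`. -/
noncomputable def extL (k : Type*) {A : Type*} (B : Type*) [Field k] [CommRing A] [CommRing B]
    [Algebra k A] [Algebra k B] (I : Ideal A) : Ideal (A ⊗[k] B) :=
  I.map (Algebra.TensorProduct.includeLeft : A →ₐ[k] A ⊗[k] B)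

/-- Extension of an ideal of `B` to `A ⊗[k] B`. -/
noncomputable def extR (k A : Type*) {B : Type*} [Field k] [CommRing A] [CommRing B]
    [Algebra k A] [Algebra k B] (J : Ideal B) : Ideal (A ⊗[k] B) :=
  J.map (Algebra.TensorProduct.includeRight : B →ₐ[k] A ⊗[k] B)

/-- The saturation `I : K^∞ = ⋃ₜ (I : Kᵗ)`. -/
noncomputable def satur {A : Type*} [CommRing A] (I K : Ideal A) : Ideal A :=
  ⨆ t : ℕ, I.colon ((K ^ t : Ideal A) : Set A)

section Aux

variable {k A B : Type*} [Field k] [CommRing A] [CommRing B] [Algebra k A] [Algebra k B]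

lemma satur_ge {I K : Ideal A} : I ≤ satur I K := by
  have h := le_iSup (fun t : ℕ => I.colon ((K ^ t : Ideal A) : Set A)) 0
  refine le_trans ?_ h
  intro x hx
  rw [Submodule.mem_colon]
  intro p _
  exact I.mul_mem_right p hx

lemma colon_le_satur {I K : Ideal A} (t : ℕ) : I.colon ((K ^ t : Ideal A) : Set A) ≤ satur I K :=
  le_iSup (fun t : ℕ => I.colon ((K ^ t : Ideal A) : Set A)) t

lemma smul_eq_includeLeft_mul (κ : A) (x : A ⊗[k] B) :
    κ • x = (Algebra.TensorProduct.includeLeft (S := k) κ) * x := by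
  rw [Algebra.smul_def]; rfl

lemma smul_mem_ideal (κ : A) {X : Ideal (A ⊗[k] B)} {x : A ⊗[k] B} (hx : x ∈ X) :
    κ • x ∈ X := by
  rw [smul_eq_includeLeft_mul]; exact X.mul_mem_left _ hx

/-- `extR` as an `A`-submodule is the base change of the underlying `k`-submodule. -/
lemma extR_restrict (Q : Ideal B) :
    (extR k A Q).restrictScalars A = (Q.restrictScalars k).baseChange A := by
  apply le_antisymm
  · intro x hx
    rw [Submodule.restrictScalars_mem] at hx
    have closed : ∀ r : A ⊗[k] B, ∀ y ∈ (Q.restrictScalars k).baseChange A,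
        r * y ∈ (Q.restrictScalars k).baseChange A := by
      intro r
      induction r using TensorProduct.induction_on with
      | zero => intro y _; rw [zero_mul]; exact Submodule.zero_mem _
      | tmul a b =>
        intro y hy
        rw [Submodule.baseChange_eq_span] at hy
        refine Submodule.span_induction ?_ ?_ ?_ ?_ hy
        · rintro z ⟨q, hq, rfl⟩
          simp only [SetLike.mem_coe, Submodule.restrictScalars_mem] at hq
          have : (a ⊗ₜ[k] b) * ((TensorProduct.mk k A B 1) q) = a ⊗ₜ[k] (b * q) := by
            simp [TensorProduct.mk_apply, Algebra.TensorProduct.tmul_mul_tmul]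
          rw [this]
          exact Submodule.tmul_mem_baseChange_of_mem a (Q.mul_mem_left b hq)
        · rw [mul_zero]; exact Submodule.zero_mem _
        · intro y₁ y₂ _ _ h1 h2
          rw [mul_add]; exact Submodule.add_mem _ h1 h2
        · intro c y _ h1
          rw [mul_smul_comm]; exact Submodule.smul_mem _ c h1
      | add r₁ r₂ h1 h2 =>
        intro y hy
        rw [add_mul]; exact Submodule.add_mem _ (h1 y hy) (h2 y hy)
    refine Submodule.span_induction ?_ ?_ ?_ ?_ hx
    · rintro z ⟨q, hq, rfl⟩
      exact Submodule.tmul_mem_baseChange_of_mem 1 hq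
    · exact Submodule.zero_mem _
    · intro y₁ y₂ _ _ h1 h2; exact Submodule.add_mem _ h1 h2
    · intro r y _ h1
      rw [smul_eq_mul]
      exact closed r y h1
  · rw [Submodule.baseChange_eq_span, Submodule.span_le]
    rintro z ⟨q, hq, rfl⟩
    simp only [SetLike.mem_coe, Submodule.restrictScalars_mem] at hq ⊢
    exact Ideal.mem_map_of_mem _ hq

/-- `extL` as an `A`-submodule is `P • ⊤`. -/
lemma extL_restrict (P : Ideal A) :
    (extL k B P).restrictScalars A = P • (⊤ : Submodule A (A ⊗[k] B)) := by
  apply le_antisymm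
  · intro x hx
    rw [Submodule.restrictScalars_mem] at hx
    have closed : ∀ r : A ⊗[k] B, ∀ y ∈ P • (⊤ : Submodule A (A ⊗[k] B)),
        r * y ∈ P • (⊤ : Submodule A (A ⊗[k] B)) := by
      intro r y hy
      refine Submodule.smul_induction_on hy ?_ ?_
      · intro p hp n _
        rw [mul_smul_comm]
        exact Submodule.smul_mem_smul hp trivial
      · intro y₁ y₂ h1 h2
        rw [mul_add]; exact Submodule.add_mem _ h1 h2
    refine Submodule.span_induction ?_ ?_ ?_ ?_ hx
    · rintro z ⟨p, hp, rfl⟩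
      have : (Algebra.TensorProduct.includeLeft (S := k) p : A ⊗[k] B) = p • 1 := by
        rw [smul_eq_includeLeft_mul, mul_one]
      rw [this]
      exact Submodule.smul_mem_smul hp trivial
    · exact Submodule.zero_mem _
    · intro y₁ y₂ _ _ h1 h2; exact Submodule.add_mem _ h1 h2
    · intro r y _ h1
      rw [smul_eq_mul]
      exact closed r y h1
  · refine Submodule.smul_le.mpr ?_
    intro p hp n _
    rw [Submodule.restrictScalars_mem, smul_eq_includeLeft_mul]
    exact Ideal.mul_mem_right n _ (Ideal.mem_map_of_mem _ hp)

lemma extLR (P : Ideal A) (Q : Ideal B) :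
    (extL k B P * extR k A Q).restrictScalars A
      = P • ((Q.restrictScalars k).baseChange A) := by
  rw [← extR_restrict]
  apply le_antisymm
  · intro x hx
    rw [Submodule.restrictScalars_mem] at hx
    refine Submodule.mul_induction_on hx ?_ ?_
    · intro m hm n hn
      have hm' : m ∈ P • (⊤ : Submodule A (A ⊗[k] B)) := by
        rw [← extL_restrict]; exact hm
      refine Submodule.smul_induction_on hm' ?_ ?_
      · intro p hp u _
        rw [smul_mul_assoc]
        exact Submodule.smul_mem_smul hp
          (by rw [Submodule.restrictScalars_mem]; exact Ideal.mul_mem_left _ u hn)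
      · intro y₁ y₂ h1 h2
        rw [add_mul]; exact Submodule.add_mem _ h1 h2
    · intro y₁ y₂ h1 h2; exact Submodule.add_mem _ h1 h2
  · refine Submodule.smul_le.mpr ?_
    intro p hp n hn
    rw [Submodule.restrictScalars_mem] at hn ⊢
    rw [smul_eq_includeLeft_mul]
    exact Ideal.mul_mem_mul (Ideal.mem_map_of_mem _ hp) hn

lemma natCast_ideal_eq_top {R : Type*} [CommRing R] (n : ℕ) (hn : n ≠ 0) :
    (n : Ideal R) = ⊤ := by
  obtain ⟨m, rfl⟩ := Nat.exists_eq_succ_of_ne_zero hn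
  rw [Nat.cast_succ]
  rw [Ideal.one_eq_top, Submodule.add_eq_sup, sup_top_eq]

/-- Binomial expansion for the power of a sum of ideals (no binomial coefficients needed). -/
lemma ideal_add_pow {R : Type*} [CommRing R] (X Y : Ideal R) (s : ℕ) :
    (X + Y) ^ s = ∑ i ∈ Finset.range (s + 1), X ^ i * Y ^ (s - i) := by
  rw [add_pow]
  refine Finset.sum_congr rfl ?_
  intro i hi
  rw [Finset.mem_range, Nat.lt_succ_iff] at hi
  rw [natCast_ideal_eq_top (s.choose i) (Nat.choose_pos hi).ne', Ideal.mul_top]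

lemma Ms_eq (I : Ideal A) (J : Ideal B) (s : ℕ) :
    (extL k B I + extR k A J) ^ s
      = ∑ i ∈ Finset.range (s + 1), extL k B (I ^ i) * extR k A (J ^ (s - i)) := by
  rw [ideal_add_pow]
  refine Finset.sum_congr rfl fun i _ => ?_
  simp only [extL, extR, Ideal.map_pow]

end Aux

section Aux2

variable {k A B : Type*} [Field k] [CommRing A] [CommRing B] [Algebra k A] [Algebra k B]

lemma mem_smul_top_iff_repr {F ι : Type*} [AddCommGroup F] [Module A F]
    (b : Module.Basis ι A F) (I' : Ideal A) (x : F) :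
    x ∈ I' • (⊤ : Submodule A F) ↔ ∀ i, b.repr x i ∈ I' := by
  constructor
  · intro hx i
    refine Submodule.smul_induction_on hx ?_ ?_
    · intro p hp n _
      rw [map_smul, Finsupp.smul_apply, smul_eq_mul]
      exact Ideal.mul_mem_right _ _ hp
    · intro y₁ y₂ h1 h2
      rw [map_add, Finsupp.add_apply]
      exact Ideal.add_mem _ h1 h2
  · intro h
    have htot := b.linearCombination_repr x
    rw [Finsupp.linearCombination_apply, Finsupp.sum] at htot
    rw [← htot]
    refine Submodule.sum_mem _ ?_
    intro i _
    exact Submodule.smul_mem_smul (h i) trivial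

lemma baseChange_mono {W W' : Submodule k B} (h : W ≤ W') :
    W.baseChange A ≤ W'.baseChange A :=
  by rw [Submodule.baseChange_eq_span, Submodule.baseChange_eq_span]; exact Submodule.span_mono (Submodule.map_mono h)

lemma range_baseChange_subtype (C : Submodule k B) :
    LinearMap.range (LinearMap.baseChange A C.subtype) = C.baseChange A := by
  apply le_antisymm
  · rintro x ⟨z, rfl⟩
    induction z using TensorProduct.induction_on with
    | zero => rw [map_zero]; exact Submodule.zero_mem _
    | tmul a c =>
      rw [LinearMap.baseChange_tmul]
      exact Submodule.tmul_mem_baseChange_of_mem a c.2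
    | add z₁ z₂ h1 h2 =>
      rw [map_add]; exact Submodule.add_mem _ h1 h2
  · rw [Submodule.baseChange_eq_span, Submodule.span_le]
    rintro z ⟨w, hw, rfl⟩
    simp only [SetLike.mem_coe] at hw ⊢
    exact ⟨(1 : A) ⊗ₜ[k] (⟨w, hw⟩ : C), by rw [LinearMap.baseChange_tmul]; rfl⟩

/-- The key colon computation inside a free direct summand. -/
lemma free_colon (C : Submodule k B) (I' K' : Ideal A) (hsat : I'.colon K' ≤ I')
    (y : A ⊗[k] B) (hy : y ∈ C.baseChange A)
    (h : ∀ κ ∈ K', κ • y ∈ I' • C.baseChange A) :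
    y ∈ I' • C.baseChange A := by
  set ι := LinearMap.baseChange A C.subtype with hι
  have hinj : Function.Injective ι := by
    rw [hι, LinearMap.baseChange_eq_ltensor]
    exact Module.Flat.lTensor_preserves_injective_linearMap _ C.injective_subtype
  have hmap : ∀ X : Ideal A, X • C.baseChange A
      = Submodule.map ι (X • (⊤ : Submodule A (A ⊗[k] C))) := by
    intro X
    rw [Submodule.map_smul'', Submodule.map_top, range_baseChange_subtype]
  obtain ⟨y₀, rfl⟩ : ∃ y₀, ι y₀ = y :=
    LinearMap.mem_range.mp ((range_baseChange_subtype (A := A) C).ge hy)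
  have hcoord : y₀ ∈ I' • (⊤ : Submodule A (A ⊗[k] C)) := by
    have bC : Module.Basis (Module.Basis.ofVectorSpaceIndex k C) k C := Module.Basis.ofVectorSpace k C
    set b' : Module.Basis (Module.Basis.ofVectorSpaceIndex k C) A (A ⊗[k] C) :=
      Algebra.TensorProduct.basis A bC with hb'
    rw [mem_smul_top_iff_repr b']
    intro i
    have hcol : b'.repr y₀ i ∈ I'.colon K' := by
      rw [Submodule.mem_colon]
      intro κ hκ
      have h1 : κ • y₀ ∈ I' • (⊤ : Submodule A (A ⊗[k] C)) := by
        have h2 := h κ hκ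
        rw [hmap] at h2
        have h3 : ι (κ • y₀) ∈ Submodule.map ι (I' • (⊤ : Submodule A (A ⊗[k] C))) := by
          rw [map_smul]; exact h2
        obtain ⟨z, hz, hz2⟩ := h3
        rwa [← hinj hz2]
      have := (mem_smul_top_iff_repr b' I' (κ • y₀)).mp h1 i
      rw [map_smul, Finsupp.smul_apply, smul_eq_mul] at this
      rw [smul_eq_mul, mul_comm]
      exact this
    exact hsat hcol
  rw [hmap]
  exact ⟨y₀, hcoord, rfl⟩

/-- Existence of a good linear projection for the filtration step. -/
lemma exists_proj (W U : Submodule k B) (hWU : W ≤ U) :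
    ∃ (C : Submodule k B) (g : B →ₗ[k] B), C ≤ U ∧ (∀ b, g b ∈ C) ∧
      (∀ w ∈ W, g w = 0) ∧ (∀ u ∈ U, u - g u ∈ W) := by
  obtain ⟨E, hE⟩ := Submodule.exists_isCompl U
  obtain ⟨D, hD⟩ := Submodule.exists_isCompl W
  set C := U ⊓ D with hC
  have hWE_inf : ∀ v ∈ W ⊔ E, v ∈ U → v ∈ W := by
    intro v hv hvU
    obtain ⟨w, hw, e, he, rfl⟩ := Submodule.mem_sup.mp hv
    have heU : e ∈ U := by
      have : e = w + e - w := by ring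
      rw [this]
      exact Submodule.sub_mem _ hvU (hWU hw)
    have : e ∈ U ⊓ E := ⟨heU, he⟩
    rw [hE.inf_eq_bot] at this
    rw [Submodule.mem_bot] at this
    rw [this, add_zero]
    exact hw
  have hcompl : IsCompl C (W ⊔ E) := by
    constructor
    · rw [disjoint_iff]
      rw [Submodule.eq_bot_iff]
      rintro v ⟨⟨hvU, hvD⟩, hv2⟩
      have hvW : v ∈ W := hWE_inf v hv2 hvU
      have : v ∈ W ⊓ D := ⟨hvW, hvD⟩
      rw [hD.inf_eq_bot] at this
      exact this
    · rw [codisjoint_iff, Submodule.eq_top_iff']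
      intro b
      have hb : b ∈ U ⊔ E := by rw [hE.sup_eq_top]; trivial
      obtain ⟨u, hu, e, he, rfl⟩ := Submodule.mem_sup.mp hb
      have hu' : u ∈ W ⊔ D := by rw [hD.sup_eq_top]; trivial
      obtain ⟨w, hw, d, hd, rfl⟩ := Submodule.mem_sup.mp hu'
      have hdU : d ∈ U := by
        have h1 : d = (w + d) - w := by ring
        rw [h1]
        exact Submodule.sub_mem _ hu (hWU hw)
      refine Submodule.mem_sup.mpr ⟨d, ⟨hdU, hd⟩, w + e, Submodule.mem_sup.mpr ⟨w, hw, e, he, rfl⟩, by ring⟩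
  set p := C.linearProjOfIsCompl (W ⊔ E) hcompl with hp
  refine ⟨C, C.subtype.comp p, inf_le_left, fun b => (p b).2, ?_, ?_⟩
  · intro w hw
    have : p w = 0 :=
      Submodule.projectionOnto_apply_of_mem_right hcompl (Submodule.mem_sup_left hw)
    simp [this]
  · intro u hu
    have hp2 : p ((C.subtype.comp p) u) = p u := by
      simp only [LinearMap.comp_apply, Submodule.coe_subtype]
      exact Submodule.linearProjOfIsCompl_apply_left hcompl (p u)
    have hzero : p (u - (C.subtype.comp p) u) = 0 := by
      rw [map_sub, hp2, sub_self]
    have hWE : u - (C.subtype.comp p) u ∈ W ⊔ E :=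
      (Submodule.linearProjOfIsCompl_apply_eq_zero_iff hcompl).mp hzero
    refine hWE_inf _ hWE ?_
    exact Submodule.sub_mem _ hu ((inf_le_left : U ⊓ D ≤ U) (p u).2)

end Aux2

section Core

variable {k A B : Type*} [Field k] [CommRing A] [CommRing B] [Algebra k A] [Algebra k B]

lemma map_baseChange_le (g : B →ₗ[k] B) (W : Submodule k B) :
    Submodule.map (LinearMap.baseChange A g) (W.baseChange A)
      ≤ (W.map g).baseChange A := by
  rw [Submodule.baseChange_eq_span, Submodule.map_span, Submodule.span_le]
  rintro z ⟨z', ⟨w, hw, rfl⟩, rfl⟩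
  simp only [SetLike.mem_coe] at hw ⊢
  rw [TensorProduct.mk_apply, LinearMap.baseChange_tmul]
  exact Submodule.tmul_mem_baseChange_of_mem 1 (Submodule.mem_map_of_mem hw)

lemma sub_baseChange_mem (g : B →ₗ[k] B) {W W' : Submodule k B}
    (hg : ∀ w ∈ W, w - g w ∈ W') {x : A ⊗[k] B} (hx : x ∈ W.baseChange A) :
    x - LinearMap.baseChange A g x ∈ W'.baseChange A := by
  rw [Submodule.baseChange_eq_span] at hx
  refine Submodule.span_induction ?_ ?_ ?_ ?_ hx
  · rintro z ⟨w, hw, rfl⟩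
    simp only [SetLike.mem_coe] at hw
    rw [TensorProduct.mk_apply, LinearMap.baseChange_tmul, ← TensorProduct.tmul_sub]
    exact Submodule.tmul_mem_baseChange_of_mem 1 (hg w hw)
  · rw [map_zero, sub_zero]; exact Submodule.zero_mem _
  · intro y₁ y₂ _ _ h1 h2
    rw [map_add]
    have : y₁ + y₂ - (LinearMap.baseChange A g y₁ + LinearMap.baseChange A g y₂)
        = (y₁ - LinearMap.baseChange A g y₁) + (y₂ - LinearMap.baseChange A g y₂) := by ring
    rw [this]
    exact Submodule.add_mem _ h1 h2
  · intro a y _ h1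
    rw [map_smul, ← smul_sub]
    exact Submodule.smul_mem _ a h1

lemma restrictScalars_add (X Y : Ideal (A ⊗[k] B)) :
    (X + Y).restrictScalars A = X.restrictScalars A + Y.restrictScalars A := by
  ext z
  simp only [Submodule.add_eq_sup, Submodule.mem_sup, Submodule.restrictScalars_mem]

lemma restrictScalars_sum {ι : Type*} (s : Finset ι) (f : ι → Ideal (A ⊗[k] B)) :
    (∑ i ∈ s, f i).restrictScalars A = ∑ i ∈ s, (f i).restrictScalars A := by
  classical
  induction s using Finset.induction_on with
  | empty => simp [Submodule.restrictScalars_bot]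
  | insert _ _ hnotin ih =>
    rw [Finset.sum_insert hnotin, Finset.sum_insert hnotin, restrictScalars_add, ih]

lemma sum_le_iff_submodule {ι M : Type*} [AddCommMonoid M] [Module A M]
    (s : Finset ι) (f : ι → Submodule A M) (Y : Submodule A M) :
    (∑ i ∈ s, f i) ≤ Y ↔ ∀ i ∈ s, f i ≤ Y := by
  classical
  induction s using Finset.induction_on with
  | empty => simp
  | insert _ _ hnotin ih =>
    rw [Finset.sum_insert hnotin, Submodule.add_eq_sup, sup_le_iff, ih]
    simp [Finset.forall_mem_insert]

/-- The main inductive claim: saturating by `K` from the left factor, elements of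
`(J^j)ᵉ` that are carried into `M^s` by `K^t` lie in `M^s`. -/
lemma core_claim (I K : Ideal A) (J : Ideal B) (s t : ℕ)
    (hIK : ∀ i ≤ s, satur (I ^ i) K = I ^ i) :
    ∀ (d j : ℕ), s ≤ j + d → ∀ x : A ⊗[k] B,
      x ∈ ((J ^ j).restrictScalars k).baseChange A →
      (∀ κ ∈ K ^ t, κ • x ∈ (extL k B I + extR k A J) ^ s) →
      x ∈ (extL k B I + extR k A J) ^ s := by
  set M := extL k B I + extR k A J with hM
  intro d
  induction d with
  | zero =>
    intro j hj x hx _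
    rw [Nat.add_zero] at hj
    have h1 : ((J ^ j).restrictScalars k).baseChange A
        ≤ ((J ^ s).restrictScalars k).baseChange A :=
      baseChange_mono (fun z hz => Ideal.pow_le_pow_right hj hz)
    have h2 : x ∈ (extR k A (J ^ s)).restrictScalars A := by
      rw [extR_restrict]; exact h1 hx
    rw [Submodule.restrictScalars_mem] at h2
    have h3 : extR k A (J ^ s) ≤ M ^ s := by
      rw [extR, Ideal.map_pow, hM]
      exact Ideal.pow_right_mono le_sup_right s
    exact h3 h2
  | succ d ih =>
    intro j hj x hx hκx
    by_cases hd : s ≤ j + d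
    · exact ih j hd x hx hκx
    · have hjs : j < s := by omega
      have hj1 : s ≤ (j + 1) + d := by omega
      -- the filtration step
      set U := (J ^ j).restrictScalars k with hU
      set W := (J ^ (j + 1)).restrictScalars k with hW
      have hWU : W ≤ U := fun z hz => Ideal.pow_le_pow_right (Nat.le_succ j) hz
      obtain ⟨C, g, hCU, hgC, hgW, hgU⟩ := exists_proj W U hWU
      set G := LinearMap.baseChange A g with hG
      -- G maps M^s into I^(s-j) • C.baseChange A
      have hGM : ∀ z ∈ (M ^ s : Ideal (A ⊗[k] B)), G z ∈ (I ^ (s - j)) • C.baseChange A := by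
        intro z hz
        have h0 : Submodule.map G ((M ^ s : Ideal (A ⊗[k] B)).restrictScalars A)
            ≤ (I ^ (s - j)) • C.baseChange A := by
          rw [hM, Ms_eq, restrictScalars_sum, Submodule.map_le_iff_le_comap,
            sum_le_iff_submodule]
          intro i hi
          rw [← Submodule.map_le_iff_le_comap, extLR, Submodule.map_smul'']
          by_cases hij : s - i ≥ j + 1
          · have hkill : Submodule.map g ((J ^ (s - i)).restrictScalars k) = ⊥ := by
              rw [Submodule.eq_bot_iff]
              rintro y ⟨w, hw, rfl⟩
              exact hgW w (Ideal.pow_le_pow_right hij hw)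
            have h1 : Submodule.map G (((J ^ (s - i)).restrictScalars k).baseChange A)
                ≤ (⊥ : Submodule k B).baseChange A := by
              refine le_trans (map_baseChange_le g _) ?_
              rw [hkill]
            refine le_trans (Submodule.smul_mono le_rfl h1) ?_
            rw [Submodule.baseChange_bot, Submodule.smul_bot]
            exact bot_le
          · have his : s - j ≤ i := by
              rw [Finset.mem_range, Nat.lt_succ_iff] at hi
              omega
            have h1 : Submodule.map G (((J ^ (s - i)).restrictScalars k).baseChange A)
                ≤ C.baseChange A := by
              refine le_trans (map_baseChange_le g _) ?_
              refine baseChange_mono ?_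
              rintro y ⟨w, _, rfl⟩
              exact hgC w
            exact Submodule.smul_mono (Ideal.pow_le_pow_right his) h1
        exact h0 ⟨z, by simpa [Submodule.restrictScalars_mem] using hz, rfl⟩
      -- x - G x lies in W's base change and is carried to M^s by K^t
      have hdiff : x - G x ∈ W.baseChange A := sub_baseChange_mem g hgU hx
      have hGxC : G x ∈ C.baseChange A := by
        have h1 : G x ∈ Submodule.map G (U.baseChange A) := Submodule.mem_map_of_mem hx
        have h2 := map_baseChange_le (A := A) g U h1
        refine baseChange_mono ?_ h2
        rintro y ⟨w, _, rfl⟩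
        exact hgC w
      have hsmul : ∀ κ ∈ K ^ t, κ • G x ∈ (I ^ (s - j)) • C.baseChange A := by
        intro κ hκ
        rw [← map_smul]
        exact hGM _ (hκx κ hκ)
      -- colon step in the free summand
      have hsat : (I ^ (s - j)).colon ((K ^ t : Ideal A) : Set A) ≤ I ^ (s - j) := by
        have h1 := colon_le_satur (I := I ^ (s - j)) (K := K) t
        rw [hIK (s - j) (Nat.sub_le s j)] at h1
        exact h1
      have hGxM' : G x ∈ (I ^ (s - j)) • C.baseChange A :=
        free_colon C _ _ hsat _ hGxC hsmul
      -- I^(s-j) • C.baseChange A ≤ M^s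
      have hsmall : (I ^ (s - j)) • C.baseChange A ≤ (M ^ s : Ideal (A ⊗[k] B)).restrictScalars A := by
        have h1 : (I ^ (s - j)) • C.baseChange A
            ≤ (I ^ (s - j)) • (((J ^ j).restrictScalars k).baseChange A) :=
          Submodule.smul_mono le_rfl (baseChange_mono hCU)
        rw [← extLR] at h1
        refine le_trans h1 ?_
        intro z hz
        rw [Submodule.restrictScalars_mem] at hz ⊢
        have h2 : extL k B (I ^ (s - j)) * extR k A (J ^ j) ≤ M ^ s := by
          rw [extL, extR, Ideal.map_pow, Ideal.map_pow, hM]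
          calc Ideal.map _ I ^ (s - j) * Ideal.map _ J ^ j
              ≤ (extL k B I ⊔ extR k A J) ^ (s - j) * (extL k B I ⊔ extR k A J) ^ j :=
                Ideal.mul_mono (Ideal.pow_right_mono le_sup_left _)
                  (Ideal.pow_right_mono le_sup_right _)
            _ = (extL k B I ⊔ extR k A J) ^ s := by
                rw [← pow_add, Nat.sub_add_cancel (le_of_lt hjs)]
            _ = (extL k B I + extR k A J) ^ s := rfl
        exact h2 hz
      have hGxM : G x ∈ (M ^ s : Ideal (A ⊗[k] B)) := by
        have := hsmall hGxM'
        rwa [Submodule.restrictScalars_mem] at this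
      have hκdiff : ∀ κ ∈ K ^ t, κ • (x - G x) ∈ (M ^ s : Ideal (A ⊗[k] B)) := by
        intro κ hκ
        rw [smul_sub]
        exact Submodule.sub_mem _ (hκx κ hκ) (smul_mem_ideal κ hGxM)
      have hdiffM : x - G x ∈ (M ^ s : Ideal (A ⊗[k] B)) := ih (j + 1) hj1 _ hdiff hκdiff
      have : x = (x - G x) + G x := by ring
      rw [this]
      exact Submodule.add_mem _ hdiffM hGxM

end Core

section Assemble

variable {k A B : Type*} [Field k] [CommRing A] [CommRing B] [Algebra k A] [Algebra k B]

lemma coreA (I K : Ideal A) (J : Ideal B) (s t : ℕ)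
    (hIK : ∀ i ≤ s, satur (I ^ i) K = I ^ i) (x : A ⊗[k] B)
    (hx : ∀ κ ∈ K ^ t, κ • x ∈ (extL k B I + extR k A J) ^ s) :
    x ∈ (extL k B I + extR k A J) ^ s := by
  refine core_claim I K J s t hIK s 0 (by omega) x ?_ hx
  have h1 : ((J ^ 0).restrictScalars k) = (⊤ : Submodule k B) := by
    rw [pow_zero, Ideal.one_eq_top]
    rfl
  rw [h1, Submodule.baseChange_top]
  trivial

lemma comm_map_extL (I : Ideal A) :
    (extL k B I).map ((Algebra.TensorProduct.comm k A B).toRingEquiv :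
      (A ⊗[k] B) →+* (B ⊗[k] A)) = extR k B I := by
  apply le_antisymm
  · rw [Ideal.map_le_iff_le_comap, extL, Ideal.map_le_iff_le_comap]
    intro a ha
    rw [Ideal.mem_comap, Ideal.mem_comap]
    have : ((Algebra.TensorProduct.comm k A B).toRingEquiv :
        (A ⊗[k] B) →+* (B ⊗[k] A)) (Algebra.TensorProduct.includeLeft (S := k) a)
        = (Algebra.TensorProduct.includeRight : A →ₐ[k] B ⊗[k] A) a := by
      simp [Algebra.TensorProduct.comm_tmul]
    rw [this]
    exact Ideal.mem_map_of_mem _ ha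
  · rw [extR, Ideal.map_le_iff_le_comap]
    intro a ha
    rw [Ideal.mem_comap]
    have : (Algebra.TensorProduct.includeRight : A →ₐ[k] B ⊗[k] A) a
        = ((Algebra.TensorProduct.comm k A B).toRingEquiv :
          (A ⊗[k] B) →+* (B ⊗[k] A)) (Algebra.TensorProduct.includeLeft (S := k) a) := by
      simp [Algebra.TensorProduct.comm_tmul]
    rw [this]
    exact Ideal.mem_map_of_mem _ (Ideal.mem_map_of_mem _ ha)

lemma comm_map_extR (J : Ideal B) :
    (extR k A J).map ((Algebra.TensorProduct.comm k A B).toRingEquiv :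
      (A ⊗[k] B) →+* (B ⊗[k] A)) = extL k A J := by
  apply le_antisymm
  · rw [Ideal.map_le_iff_le_comap, extR, Ideal.map_le_iff_le_comap]
    intro b hb
    rw [Ideal.mem_comap, Ideal.mem_comap]
    have : ((Algebra.TensorProduct.comm k A B).toRingEquiv :
        (A ⊗[k] B) →+* (B ⊗[k] A)) (Algebra.TensorProduct.includeRight b)
        = (Algebra.TensorProduct.includeLeft : B →ₐ[k] B ⊗[k] A) b := by
      simp [Algebra.TensorProduct.comm_tmul]
    rw [this]
    exact Ideal.mem_map_of_mem _ hb
  · rw [extL, Ideal.map_le_iff_le_comap]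
    intro b hb
    rw [Ideal.mem_comap]
    have : (Algebra.TensorProduct.includeLeft : B →ₐ[k] B ⊗[k] A) b
        = ((Algebra.TensorProduct.comm k A B).toRingEquiv :
          (A ⊗[k] B) →+* (B ⊗[k] A)) (Algebra.TensorProduct.includeRight b) := by
      simp [Algebra.TensorProduct.comm_tmul]
    rw [this]
    exact Ideal.mem_map_of_mem _ (Ideal.mem_map_of_mem _ hb)

lemma coreB (I : Ideal A) (J L : Ideal B) (s t : ℕ)
    (hJL : ∀ i ≤ s, satur (J ^ i) L = J ^ i) (x : A ⊗[k] B)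
    (hx : ∀ lam ∈ L ^ t,
      (Algebra.TensorProduct.includeRight lam) * x ∈ (extL k B I + extR k A J) ^ s) :
    x ∈ (extL k B I + extR k A J) ^ s := by
  set eh := ((Algebra.TensorProduct.comm k A B).toRingEquiv :
    (A ⊗[k] B) →+* (B ⊗[k] A)) with heh
  have hmapM : ((extL k B I + extR k A J) ^ s).map eh = (extL k A J + extR k B I) ^ s := by
    rw [Ideal.map_pow, Submodule.add_eq_sup, Ideal.map_sup, comm_map_extL, comm_map_extR]
    rw [Submodule.add_eq_sup, sup_comm]
  have hex : eh x ∈ (extL k A J + extR k B I) ^ s := by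
    refine coreA J L I s t hJL (eh x) ?_
    intro κ hκ
    rw [smul_eq_includeLeft_mul]
    have h1 : (Algebra.TensorProduct.includeLeft (S := k) κ : B ⊗[k] A) * eh x
        = eh ((Algebra.TensorProduct.includeRight κ : A ⊗[k] B) * x) := by
      rw [_root_.map_mul]
      congr 1
    rw [h1, ← hmapM]
    exact Ideal.mem_map_of_mem _ (hx κ hκ)
  rw [← hmapM] at hex
  exact Ideal.apply_mem_of_equiv_iff.mp hex

end Assemble

/-- If `Iⁱ : K^∞ = Iⁱ` and `Jⁱ : L^∞ = Jⁱ` for all `i ≤ s`, then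
`(I+J)^s :_R (KL)^∞ = (I+J)^s` in `R = A ⊗[k] B`. -/
theorem satur_power_eq_power {k A B : Type*} [Field k] [CommRing A]
    [CommRing B] [Algebra k A] [Algebra k B] [IsNoetherianRing A] [IsNoetherianRing B]
    [IsNoetherianRing (A ⊗[k] B)]
    (I K : Ideal A) (J L : Ideal B) (s : ℕ)
    (hIK : ∀ i ≤ s, satur (I ^ i) K = I ^ i)
    (hJL : ∀ i ≤ s, satur (J ^ i) L = J ^ i) :
    satur ((extL k B I + extR k A J) ^ s) (extL k B K * extR k A L) =
      (extL k B I + extR k A J) ^ s := by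
  set M := extL k B I + extR k A J with hM
  apply le_antisymm ?_ satur_ge
  intro x hx
  rw [satur] at hx
  have hdir : Directed (· ≤ ·) fun t : ℕ => (M ^ s).colon (((extL k B K * extR k A L) ^ t : Ideal (A ⊗[k] B)) : Set (A ⊗[k] B)) := by
    intro t t'
    refine ⟨max t t', ?_, ?_⟩ <;>
    · intro z hz
      rw [Submodule.mem_colon] at hz ⊢
      intro p hp
      refine hz p ?_
      exact Ideal.pow_le_pow_right (by omega) hp
  obtain ⟨t, hxt⟩ := (Submodule.mem_iSup_of_directed _ hdir).mp hx
  have hKL : (extL k B K * extR k A L) ^ t = extL k B (K ^ t) * extR k A (L ^ t) := by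
    rw [mul_pow]
    simp only [extL, extR, Ideal.map_pow]
  refine coreA I K J s t hIK x ?_
  intro κ hκ
  rw [smul_eq_includeLeft_mul]
  refine coreB I J L s t hJL _ ?_
  intro lam hlam
  have h1 : (Algebra.TensorProduct.includeRight lam : A ⊗[k] B) *
      ((Algebra.TensorProduct.includeLeft (S := k) κ) * x)
      = ((Algebra.TensorProduct.includeLeft (S := k) κ) *
          (Algebra.TensorProduct.includeRight lam : A ⊗[k] B)) * x := by ring
  rw [h1]
  have h2 : (Algebra.TensorProduct.includeLeft (S := k) κ) *
      (Algebra.TensorProduct.includeRight lam : A ⊗[k] B)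
      ∈ (extL k B K * extR k A L) ^ t := by
    rw [hKL]
    exact Ideal.mul_mem_mul (Ideal.mem_map_of_mem _ hκ) (Ideal.mem_map_of_mem _ hlam)
  have h3 := Submodule.mem_colon.mp hxt _ h2
  rwa [smul_eq_mul, mul_comm] at h3
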